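/- Let K be a field of characteristic p > 0, Ω a subfield of K, and ζ an Ω-algebra automorphism of K of finite order E with p not dividing E. Suppose y, z ∈ K with y ≠ 0, and α, β, γ ∈ Ω with α ≠ 0 and γ ≠ 0, such that ζ(y) = α·y and ζ(z) = β·y + γ·z. Then there exists u ∈ Ω such that ζ(z − u·y) = γ·(z − u·y). In particular, z may be replaced by an element z' with the same γ-eigenvalue relation ζ(z') = γ·z'. -/

import Mathlib

/-!
If `α ≠ γ`, the matrix of `ζ` on `span {y, z}` has distinct eigenvalues and
`u = β / (α - γ)` works. If `α = γ`, then `w = z / y` satisfies `ζ w = w + β / α`, so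
`w = ζ^E w = w + E β / α`; since `p ∤ E` this forces `β = 0`, and `u = 0` works.
-/

theorem iterate_apply_eq_add_nsmul {M F : Type*} [AddMonoid M] [FunLike F M M]
    [AddMonoidHomClass F M M] (f : F) {w c : M} (hc : f c = c) (hw : f w = w + c) (n : ℕ) :
    (⇑f)^[n] w = w + n • c := by
  induction n with
  | zero => simp
  | succ n ih =>
    rw [Function.iterate_succ_apply', ih, map_add, map_nsmul, hc, hw, succ_nsmul', add_assoc]

theorem RingEquiv.eq_zero_of_apply_eq_add_of_pow_eq_one {K : Type*} [Field K] (p : ℕ)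
    [CharP K p] (σ : K ≃+* K) {E : ℕ} (hσE : σ ^ E = 1) (hpE : ¬ p ∣ E) {w c : K}
    (hc : σ c = c) (hw : σ w = w + c) : c = 0 := by
  have hEc : (E : K) * c = 0 := by
    have h := iterate_apply_eq_add_nsmul σ hc hw E
    rwa [← RingAut.coe_pow, hσE, RingAut.coe_one, id, nsmul_eq_mul, left_eq_add] at h
  have hE : (E : K) ≠ 0 := by rwa [Ne, CharP.cast_eq_zero_iff K p]
  exact (mul_eq_zero.mp hEc).resolve_left hE

theorem stmt3_general (K : Type*) [Field K] (p : ℕ) [CharP K p]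
    (Ω : Subfield K) (ζ : K ≃+* K) (hζ : ∀ x ∈ Ω, ζ x = x)
    (E : ℕ) (horder : orderOf ζ = E) (hpE : ¬ p ∣ E)
    (y z : K) (hy0 : y ≠ 0) (α β γ : K)
    (hα : α ∈ Ω) (hβ : β ∈ Ω) (hγ : γ ∈ Ω) (hα0 : α ≠ 0)
    (hy : ζ y = α * y) (hz : ζ z = β * y + γ * z) :
    ∃ u ∈ Ω, ζ (z - u * y) = γ * (z - u * y) := by
  by_cases hαγ : α = γ
  · subst hαγ
    have hc : ζ (β / α) = β / α := hζ _ (Ω.div_mem hβ hα)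
    have hw : ζ (z / y) = z / y + β / α := by
      rw [map_div₀, hy, hz]
      field_simp
      ring
    have hζE : ζ ^ E = 1 := horder ▸ pow_orderOf_eq_one ζ
    have hβ0 : β = 0 := by
      simpa [hα0] using ζ.eq_zero_of_apply_eq_add_of_pow_eq_one p hζE hpE hc hw
    exact ⟨0, Ω.zero_mem, by simp [hz, hβ0]⟩
  · have hu : β / (α - γ) ∈ Ω := Ω.div_mem hβ (Ω.sub_mem hα hγ)
    refine ⟨β / (α - γ), hu, ?_⟩
    rw [map_sub, map_mul, hζ _ hu, hy, hz]
    field_simp [sub_ne_zero.mpr hαγ]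
    ring

/-- In characteristic `p > 0`, let `ζ` be an automorphism of `K` fixing
the subfield `Ω` pointwise, of finite order `E` with `p ∤ E`. If `ζ y = α y` and
`ζ z = β y + γ z` with `y ≠ 0`, `α, β, γ ∈ Ω`, `α ≠ 0`, `γ ≠ 0`, then there is
`u ∈ Ω` with `ζ (z - u y) = γ (z - u y)`. -/
theorem stmt3 (K : Type*) [Field K] (p : ℕ) [CharP K p] (hp : 0 < p)
    (Ω : Subfield K) (ζ : K ≃+* K) (hζ : ∀ x ∈ Ω, ζ x = x)
    (E : ℕ) (hE : 0 < E) (horder : orderOf ζ = E) (hpE : ¬ p ∣ E)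
    (y z : K) (hy0 : y ≠ 0) (α β γ : K)
    (hα : α ∈ Ω) (hβ : β ∈ Ω) (hγ : γ ∈ Ω) (hα0 : α ≠ 0) (hγ0 : γ ≠ 0)
    (hy : ζ y = α * y) (hz : ζ z = β * y + γ * z) :
    ∃ u ∈ Ω, ζ (z - u * y) = γ * (z - u * y) :=
  stmt3_general K p Ω ζ hζ E horder hpE y z hy0 α β γ hα hβ hγ hα0 hy hz
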